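/- arXiv:1911.00315 — 2 statements merged into one kernel-verified Lean document; each statement's English description precedes it below -/
import Mathlib

section
/- Let A ∈ C([0,t],ℝ^n) satisfy [[A]]_κ ≤ μ and ‖A‖_∞ ≤ μ₀, and let ε ∈ (0, μ/2]. Define the perturbed path A^ε by A^ε(r) = A(r) if |A(r)−A(t)| ≤ (μ−ε)(t−r)^κ, and A^ε(r) = A(t) + (μ−ε)(t−r)^κ (A(r)−A(t))/|A(r)−A(t)| otherwise. Then ‖A^ε − A‖_∞ ≤ 2μ₀ε(μ−ε)^{-1} ≤ 4μ₀ε μ^{-1}. -/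
/-- perturbation estimate `‖Aᵉ − A‖_∞ ≤ 2μ₀ε(μ−ε)⁻¹ ≤ 4μ₀εμ⁻¹` for the
radial-projection perturbation `Aᵉ` of a path `A` with `[[A]]_κ ≤ μ`, `‖A‖_∞ ≤ μ₀`,
`ε ∈ (0, μ/2]`. -/
theorem stmt2 (n : ℕ) (t κ μ μ₀ ε : ℝ) (ht : 0 < t) (hκ : κ ∈ Set.Ioo (0:ℝ) (1/2))
    (hμ : 0 < μ) (hμ₀ : 0 < μ₀) (hε : 0 < ε) (hεμ : ε ≤ μ / 2)
    (A : ℝ → EuclideanSpace ℝ (Fin n)) (hA : ContinuousOn A (Set.Icc 0 t))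
    (hHolder : ∀ s ∈ Set.Icc (0:ℝ) t, ∀ r ∈ Set.Icc (0:ℝ) t, ‖A s - A r‖ ≤ μ * |s - r| ^ κ)
    (hBound : ∀ r ∈ Set.Icc (0:ℝ) t, ‖A r‖ ≤ μ₀)
    (Aε : ℝ → EuclideanSpace ℝ (Fin n))
    (hAε : ∀ r, Aε r =
      if ‖A r - A t‖ ≤ (μ - ε) * (t - r) ^ κ then A r
      else A t + (((μ - ε) * (t - r) ^ κ) / ‖A r - A t‖) • (A r - A t)) :
    (∀ r ∈ Set.Icc (0:ℝ) t, ‖Aε r - A r‖ ≤ 2 * μ₀ * ε * (μ - ε)⁻¹) ∧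
      2 * μ₀ * ε * (μ - ε)⁻¹ ≤ 4 * μ₀ * ε * μ⁻¹ := by
  have hμε : 0 < μ - ε := by linarith
  constructor
  · intro r hr
    rw [hAε r]
    split_ifs with h
    · simp
      positivity
    · push_neg at h
      set d := ‖A r - A t‖ with hd
      set L := (μ - ε) * (t - r) ^ κ with hL
      have htr : (0:ℝ) ≤ t - r := by linarith [hr.2]
      have hLnn : 0 ≤ L := by positivity
      have hdpos : 0 < d := lt_of_le_of_lt hLnn h
      have heq : A t + (L / d) • (A r - A t) - A r = (L / d - 1) • (A r - A t) := by
        rw [sub_smul, one_smul]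
        abel
      rw [heq, norm_smul]
      have hLd : L / d < 1 := (div_lt_one hdpos).2 h
      have : ‖(L / d - 1 : ℝ)‖ = 1 - L / d := by
        rw [Real.norm_eq_abs, abs_of_nonpos (by linarith)]; ring
      rw [this, ← hd]
      have hkey : (1 - L / d) * d = d - L := by field_simp
      rw [hkey]
      -- d ≤ μ (t-r)^κ
      have hdle : d ≤ μ * (t - r) ^ κ := by
        have := hHolder r hr t (Set.mem_Icc.2 ⟨le_of_lt ht, le_refl t⟩)
        rwa [abs_of_nonpos (by linarith [hr.2]), neg_sub] at this
      have hdμ₀ : d ≤ 2 * μ₀ := by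
        calc d ≤ ‖A r‖ + ‖A t‖ := norm_sub_le _ _
        _ ≤ μ₀ + μ₀ := add_le_add (hBound r hr)
            (hBound t (Set.mem_Icc.2 ⟨le_of_lt ht, le_refl t⟩))
        _ = 2 * μ₀ := by ring
      -- (t-r)^κ ≤ 2μ₀/(μ-ε)
      have htrk : (t - r) ^ κ ≤ 2 * μ₀ / (μ - ε) := by
        rw [le_div_iff₀ hμε]
        calc (t - r) ^ κ * (μ - ε) = L := by ring
        _ ≤ d := le_of_lt h
        _ ≤ 2 * μ₀ := hdμ₀
      calc d - L ≤ μ * (t - r) ^ κ - (μ - ε) * (t - r) ^ κ := by linarith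
      _ = ε * (t - r) ^ κ := by ring
      _ ≤ ε * (2 * μ₀ / (μ - ε)) := by
          exact mul_le_mul_of_nonneg_left htrk (le_of_lt hε)
      _ = 2 * μ₀ * ε * (μ - ε)⁻¹ := by field_simp
  · have h2 : μ / 2 ≤ μ - ε := by linarith
    have hinv : (μ - ε)⁻¹ ≤ (μ / 2)⁻¹ := inv_anti₀ (by linarith) h2
    have : (μ / 2)⁻¹ = 2 * μ⁻¹ := by field_simp
    rw [this] at hinv
    have : 2 * μ₀ * ε * (μ - ε)⁻¹ ≤ 2 * μ₀ * ε * (2 * μ⁻¹) :=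
      mul_le_mul_of_nonneg_left hinv (by positivity)
    linarith
end

section
/- With the notation of the path-perturbation lemma (A ∈ C([0,t],ℝ^n) with [[A]]_κ ≤ μ, ‖A‖_∞ ≤ μ₀, ε ∈ (0, μ/2], and A^ε the radial projection of A(r) onto the ball of radius (μ−ε)(t−r)^κ centered at A(t)), the perturbed path satisfies [[A^ε]]_κ ≤ μ. -/
set_option maxHeartbeats 1000000

open scoped RealInnerProductSpace NNReal

/-- Subadditivity of `x ↦ x ^ p` for `0 ≤ p ≤ 1` on nonnegative reals. -/
lemma rpow_subadd {x y p : ℝ} (hx : 0 ≤ x) (hy : 0 ≤ y) (hp : 0 ≤ p) (hp1 : p ≤ 1) :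
    (x + y) ^ p ≤ x ^ p + y ^ p := by
  have h := NNReal.rpow_add_le_add_rpow x.toNNReal y.toNNReal hp hp1
  have hxy : ((x.toNNReal + y.toNNReal : ℝ≥0) : ℝ) = x + y := by
    push_cast
    rw [Real.coe_toNNReal _ hx, Real.coe_toNNReal _ hy]
  calc (x + y) ^ p = ((x.toNNReal + y.toNNReal : ℝ≥0) : ℝ) ^ p := by rw [hxy]
    _ = (((x.toNNReal + y.toNNReal) ^ p : ℝ≥0) : ℝ) := (NNReal.coe_rpow _ _).symm
    _ ≤ ((x.toNNReal ^ p + y.toNNReal ^ p : ℝ≥0) : ℝ) := by exact_mod_cast h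
    _ = x ^ p + y ^ p := by
        push_cast [NNReal.coe_rpow]
        rw [Real.coe_toNNReal _ hx, Real.coe_toNNReal _ hy]

variable {E : Type*} [NormedAddCommGroup E] [InnerProductSpace ℝ E]

/-- Projecting `w` radially to the sphere of radius `b` does not increase the distance to a
point `p` with `‖p‖² ≤ b² + D²`, provided `‖p - w‖ ≤ D`. -/
lemma projA (p w : E) (b D : ℝ) (hb : 0 ≤ b) (hw : b ≤ ‖w‖)
    (hpw : ‖p - w‖ ≤ D) (hp : ‖p‖ ^ 2 ≤ b ^ 2 + D ^ 2) :
    ‖p - (b / ‖w‖) • w‖ ≤ D := by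
  have hD : 0 ≤ D := le_trans (norm_nonneg _) hpw
  rcases eq_or_lt_of_le hb with hb0 | hb0
  · have hb' : b = 0 := hb0.symm
    subst hb'
    simp only [zero_div, zero_smul, sub_zero]
    nlinarith [norm_nonneg p]
  · have hN : 0 < ‖w‖ := lt_of_lt_of_le hb0 hw
    set N := ‖w‖ with hNdef
    set S := ⟪p, w⟫ with hSdef
    have hq : (b / N) * N = b := div_mul_cancel₀ _ (ne_of_gt hN)
    have hq0 : 0 ≤ b / N := div_nonneg hb hN.le
    have hq1 : b / N ≤ 1 := by rw [div_le_one hN]; exact hw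
    have e1 : ‖p - w‖ ^ 2 = ‖p‖ ^ 2 - 2 * S + N ^ 2 := norm_sub_sq_real p w
    have nsm : ‖(b / N) • w‖ = b := by
      rw [norm_smul, Real.norm_eq_abs, abs_of_nonneg hq0, hq]
    have e2 : ‖p - (b / N) • w‖ ^ 2 = ‖p‖ ^ 2 - 2 * ((b / N) * S) + b ^ 2 := by
      rw [norm_sub_sq_real, nsm, real_inner_smul_right]
    have hpw2 : ‖p‖ ^ 2 - 2 * S + N ^ 2 ≤ D ^ 2 := by
      rw [← e1]; nlinarith [norm_nonneg (p - w)]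
    have eq1 : (b / N) * N ^ 2 = b * N := by rw [pow_two, ← mul_assoc, hq]
    have eq2 : (b / N) * (b * N) = b * b := by
      rw [mul_comm b N, ← mul_assoc, hq]
    have key : ‖p‖ ^ 2 - 2 * ((b / N) * S) + b ^ 2 ≤ D ^ 2 := by
      by_cases hc : 2 * S ≤ N ^ 2 + b * N
      · have hint : 0 ≤ (1 - b / N) * (N ^ 2 + b * N - 2 * S) :=
          mul_nonneg (by linarith) (by linarith)
        nlinarith [hint, hpw2, eq1, eq2]
      · push_neg at hc
        have hSbN : b * N ≤ S := by nlinarith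
        have h3 : (b / N) * (b * N) ≤ (b / N) * S := mul_le_mul_of_nonneg_left hSbN hq0
        nlinarith [hp, h3, eq2]
    nlinarith [norm_nonneg (p - (b / N) • w), key, e2]

/-- Distance between the two radial projections (both points outside their radii). -/
lemma projC (u v : E) (a b D : ℝ) (hb : 0 ≤ b) (hba : b ≤ a)
    (hU : a ≤ ‖u‖) (hV : b ≤ ‖v‖) (huv : ‖u - v‖ ≤ D) (hpow : a ^ 2 ≤ b ^ 2 + D ^ 2) :
    ‖(a / ‖u‖) • u - (b / ‖v‖) • v‖ ≤ D := by
  have hD : 0 ≤ D := le_trans (norm_nonneg _) huv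
  rcases eq_or_lt_of_le (hb.trans hba) with ha0 | ha0
  · have ha' : a = 0 := ha0.symm
    have hb' : b = 0 := le_antisymm (ha' ▸ hba) hb
    simp [ha', hb', hD]
  · have hU0 : 0 < ‖u‖ := lt_of_lt_of_le ha0 hU
    rcases eq_or_lt_of_le hb with hb0 | hb0
    · have hb' : b = 0 := hb0.symm
      subst hb'
      simp only [zero_div, zero_smul, sub_zero]
      rw [norm_smul, Real.norm_eq_abs, abs_of_nonneg (div_nonneg ha0.le hU0.le),
        div_mul_cancel₀ _ (ne_of_gt hU0)]
      nlinarith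
    · have hV0 : 0 < ‖v‖ := lt_of_lt_of_le hb0 hV
      set U := ‖u‖ with hUdef
      set V := ‖v‖ with hVdef
      set S := ⟪u, v⟫ with hSdef
      have eα : (a / U) * U = a := div_mul_cancel₀ _ (ne_of_gt hU0)
      have eβ : (b / V) * V = b := div_mul_cancel₀ _ (ne_of_gt hV0)
      have hα0 : 0 ≤ a / U := div_nonneg ha0.le hU0.le
      have hβ0 : 0 ≤ b / V := div_nonneg hb hV0.le
      have huv2 : U ^ 2 + V ^ 2 - 2 * S ≤ D ^ 2 := by
        have h := norm_sub_sq_real u v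
        nlinarith [norm_nonneg (u - v)]
      have n1 : ‖(a / U) • u‖ = a := by
        rw [norm_smul, Real.norm_eq_abs, abs_of_nonneg hα0]; exact eα
      have n2 : ‖(b / V) • v‖ = b := by
        rw [norm_smul, Real.norm_eq_abs, abs_of_nonneg hβ0]; exact eβ
      have e2 : ‖(a / U) • u - (b / V) • v‖ ^ 2
          = a ^ 2 + b ^ 2 - 2 * ((a / U) * ((b / V) * S)) := by
        rw [norm_sub_sq_real, n1, n2, real_inner_smul_left, real_inner_smul_right]
        ring
      have hUV : 0 < U * V := mul_pos hU0 hV0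
      have e3 : (a / U) * ((b / V) * S) * (U * V) = a * b * S := by
        field_simp
      have habUV : a * b ≤ U * V := mul_le_mul hU hV hb (le_trans ha0.le hU)
      have hXnn : 0 ≤ U ^ 2 - a ^ 2 + V ^ 2 - b ^ 2 := by nlinarith
      have key : a ^ 2 + b ^ 2 - 2 * ((a / U) * ((b / V) * S)) ≤ D ^ 2 := by
        by_cases hc : 2 * S * (U * V - a * b) ≤ (U ^ 2 - a ^ 2 + V ^ 2 - b ^ 2) * (U * V)
        · have step : (a ^ 2 + b ^ 2 - 2 * ((a / U) * ((b / V) * S))) * (U * V)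
              ≤ D ^ 2 * (U * V) := by
            nlinarith [e3, hc, mul_le_mul_of_nonneg_right huv2 hUV.le]
          exact le_of_mul_le_mul_right step hUV
        · push_neg at hc
          have K : 2 * b * (U * V - a * b) ≤ a * (U ^ 2 - a ^ 2 + V ^ 2 - b ^ 2) := by
            rcases le_total V a with hVa | hVa
            · nlinarith [sq_nonneg (a * V - a * b),
                mul_nonneg (mul_nonneg ha0.le (sub_nonneg.2 hU))
                  (by nlinarith : (0:ℝ) ≤ a * U + a * a - 2 * b * V), ha0]
            · nlinarith [sq_nonneg (a * U - b * V),
                mul_nonneg (by nlinarith : (0:ℝ) ≤ a ^ 2 - b ^ 2)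
                  (by nlinarith : (0:ℝ) ≤ V ^ 2 - a ^ 2), ha0]
          have hprod : 0 < 2 * S * (U * V - a * b) :=
            lt_of_le_of_lt (mul_nonneg hXnn hUV.le) hc
          have hpos : 0 < U * V - a * b := by
            rcases eq_or_lt_of_le habUV with he | h
            · rw [← he, sub_self, mul_zero] at hprod; linarith
            · linarith
          have c1 : 2 * b * (U * V - a * b) * (U * V)
              ≤ a * ((U ^ 2 - a ^ 2 + V ^ 2 - b ^ 2) * (U * V)) := by
            nlinarith [mul_le_mul_of_nonneg_right K hUV.le]
          have c2 : a * ((U ^ 2 - a ^ 2 + V ^ 2 - b ^ 2) * (U * V))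
              < a * (2 * S * (U * V - a * b)) := mul_lt_mul_of_pos_left hc ha0
          have c3 := c1.trans_lt c2
          have h5 : b * (U * V) < a * S := by nlinarith [c3, hpos]
          have step : (a ^ 2 + b ^ 2 - 2 * ((a / U) * ((b / V) * S))) * (U * V)
              ≤ D ^ 2 * (U * V) := by
            nlinarith [e3, mul_le_mul_of_nonneg_left h5.le (by linarith : (0:ℝ) ≤ 2 * b),
              mul_le_mul_of_nonneg_right (by linarith : a ^ 2 - b ^ 2 ≤ D ^ 2) hUV.le]
          exact le_of_mul_le_mul_right step hUV
      nlinarith [norm_nonneg ((a / U) • u - (b / V) • v), key, e2]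

/-- the perturbed path `Aᵉ` (radial projection of `A(r)` onto the ball of
radius `(μ−ε)(t−r)^κ` centered at `A(t)`) satisfies the Hölder bound `[[Aᵉ]]_κ ≤ μ`. -/
theorem stmt3 (n : ℕ) (t κ μ μ₀ ε : ℝ) (ht : 0 < t) (hκ : κ ∈ Set.Ioo (0:ℝ) (1/2))
    (hμ : 0 < μ) (hμ₀ : 0 < μ₀) (hε : 0 < ε) (hεμ : ε ≤ μ / 2)
    (A : ℝ → EuclideanSpace ℝ (Fin n)) (hA : ContinuousOn A (Set.Icc 0 t))
    (hHolder : ∀ s ∈ Set.Icc (0:ℝ) t, ∀ r ∈ Set.Icc (0:ℝ) t, ‖A s - A r‖ ≤ μ * |s - r| ^ κ)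
    (hBound : ∀ r ∈ Set.Icc (0:ℝ) t, ‖A r‖ ≤ μ₀)
    (Aε : ℝ → EuclideanSpace ℝ (Fin n))
    (hAε : ∀ r, Aε r =
      if ‖A r - A t‖ ≤ (μ - ε) * (t - r) ^ κ then A r
      else A t + (((μ - ε) * (t - r) ^ κ) / ‖A r - A t‖) • (A r - A t)) :
    ∀ s ∈ Set.Icc (0:ℝ) t, ∀ r ∈ Set.Icc (0:ℝ) t, ‖Aε s - Aε r‖ ≤ μ * |s - r| ^ κ := by
  have main : ∀ s ∈ Set.Icc (0:ℝ) t, ∀ r ∈ Set.Icc (0:ℝ) t, s ≤ r →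
      ‖Aε s - Aε r‖ ≤ μ * |s - r| ^ κ := by
    intro s hs r hr hsr
    obtain ⟨hs0, hst⟩ := hs
    obtain ⟨hr0, hrt⟩ := hr
    have hκ0 : 0 < κ := hκ.1
    have hμε : 0 < μ - ε := by linarith
    have hy0 : (0:ℝ) ≤ t - r := by linarith
    have hx0 : (0:ℝ) ≤ t - s := by linarith
    have hd0 : (0:ℝ) ≤ r - s := by linarith
    have habs : |s - r| = r - s := by rw [abs_sub_comm]; exact abs_of_nonneg hd0
    rw [hAε s, hAε r, habs]
    set a := (μ - ε) * (t - s) ^ κ with hadef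
    set b := (μ - ε) * (t - r) ^ κ with hbdef
    set D := μ * (r - s) ^ κ with hDdef
    have ha0 : 0 ≤ a := mul_nonneg hμε.le (Real.rpow_nonneg hx0 κ)
    have hb0 : 0 ≤ b := mul_nonneg hμε.le (Real.rpow_nonneg hy0 κ)
    have hba : b ≤ a :=
      mul_le_mul_of_nonneg_left (Real.rpow_le_rpow hy0 (by linarith) hκ0.le) hμε.le
    have hD0 : 0 ≤ D := mul_nonneg hμ.le (Real.rpow_nonneg hd0 κ)
    have huv : ‖(A s - A t) - (A r - A t)‖ ≤ D := by
      have h := hHolder s ⟨hs0, hst⟩ r ⟨hr0, hrt⟩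
      rw [habs] at h
      rw [sub_sub_sub_cancel_right]
      exact h
    have hpow : a ^ 2 ≤ b ^ 2 + D ^ 2 := by
      have h2 : ∀ z : ℝ, 0 ≤ z → z ^ (2 * κ) = (z ^ κ) ^ 2 := by
        intro z hz
        rw [mul_comm, Real.rpow_mul hz, show (2:ℝ) = ((2:ℕ):ℝ) by norm_num,
          Real.rpow_natCast]
      have hxyd : t - s = (t - r) + (r - s) := by ring
      have hsub : (t - s) ^ (2 * κ) ≤ (t - r) ^ (2 * κ) + (r - s) ^ (2 * κ) := by
        rw [hxyd]
        exact rpow_subadd hy0 hd0 (by linarith) (by linarith [hκ.2])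
      rw [h2 _ hx0, h2 _ hy0, h2 _ hd0] at hsub
      have hsq : (μ - ε) ^ 2 ≤ μ ^ 2 := by nlinarith
      have hrs : 0 ≤ ((r - s) ^ κ) ^ 2 := sq_nonneg _
      calc a ^ 2 = (μ - ε) ^ 2 * ((t - s) ^ κ) ^ 2 := by rw [hadef]; ring
        _ ≤ (μ - ε) ^ 2 * (((t - r) ^ κ) ^ 2 + ((r - s) ^ κ) ^ 2) := by nlinarith [sq_nonneg (μ - ε)]
        _ = b ^ 2 + (μ - ε) ^ 2 * ((r - s) ^ κ) ^ 2 := by rw [hbdef]; ring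
        _ ≤ b ^ 2 + μ ^ 2 * ((r - s) ^ κ) ^ 2 := by nlinarith
        _ = b ^ 2 + D ^ 2 := by rw [hDdef]; ring
    split_ifs with h1 h2 h2
    · rw [sub_sub_sub_cancel_right] at huv
      exact huv
    · have hrw : A s - (A t + (b / ‖A r - A t‖) • (A r - A t))
          = (A s - A t) - (b / ‖A r - A t‖) • (A r - A t) := by abel
      rw [hrw]
      exact projA (A s - A t) (A r - A t) b D hb0 (not_le.1 h2).le huv
        (by nlinarith [norm_nonneg (A s - A t)])
    · have hrw : (A t + (a / ‖A s - A t‖) • (A s - A t)) - A r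
          = (a / ‖A s - A t‖) • (A s - A t) - (A r - A t) := by abel
      rw [hrw, norm_sub_rev]
      refine projA (A r - A t) (A s - A t) a D ha0 (not_le.1 h1).le ?_ ?_
      · rw [norm_sub_rev]; exact huv
      · nlinarith [norm_nonneg (A r - A t)]
    · have hrw : (A t + (a / ‖A s - A t‖) • (A s - A t))
          - (A t + (b / ‖A r - A t‖) • (A r - A t))
          = (a / ‖A s - A t‖) • (A s - A t) - (b / ‖A r - A t‖) • (A r - A t) := by abel
      rw [hrw]
      exact projC (A s - A t) (A r - A t) a b D hb0 hba (not_le.1 h1).le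
        (not_le.1 h2).le huv hpow
  intro s hs r hr
  rcases le_total s r with h | h
  · exact main s hs r hr h
  · rw [norm_sub_rev, abs_sub_comm]
    exact main r hr s hs h
end
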